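/- Let f : [a,b] → [0,∞) be a monotonically increasing probability density function on [a,b] (so ∫_a^b f(t) dt = 1), and let E(X) = ∫_a^b t·f(t) dt be the expectation of the associated random variable X. Then for every x ∈ (a,b): (1/2)·[ (b−x)²·f₊(x) − (x−a)²·f₋(x) ] + x ≤ E(X) ≤ (1/2)·[ (b−x)²·f₋(b) − (x−a)²·f₊(a) ] + x, where f₊(α) and f₋(α) denote the right and left limits of f at α (which exist since f is monotone). -/
import Mathlib


open MeasureTheory Set intervalIntegral

private lemma integral_sub_const (x u v : ℝ) :
    (∫ t in u..v, (t - x)) = ((v - x) ^ 2 - (u - x) ^ 2) / 2 := by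
  rw [intervalIntegral.integral_comp_sub_right (fun t => t) x, integral_id]

/-- **Bounds for the expectation of a random variable with monotone density**
(Theorem 4.1): if `f : [a,b] → [0,∞)` is a monotone nondecreasing probability
density function and `x ∈ (a,b)`, then with `fpx`, `fmx` the right and left
limits of `f` at `x`, `fpa` the right limit at `a` and `fmb` the left limit at
`b`,
`(1/2)[(b−x)² f₊(x) − (x−a)² f₋(x)] + x ≤ E(X)
  ≤ (1/2)[(b−x)² f₋(b) − (x−a)² f₊(a)] + x`. -/
theorem expectation_bounds_monotone_pdf
    (a b : ℝ) (hab : a < b) (f : ℝ → ℝ)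
    (hmono : MonotoneOn f (Set.Icc a b))
    (hnonneg : ∀ t ∈ Set.Icc a b, 0 ≤ f t)
    (hpdf : (∫ t in a..b, f t) = 1)
    (x : ℝ) (hx : x ∈ Set.Ioo a b)
    (fpx fmx fpa fmb : ℝ)
    (hfpx : Filter.Tendsto f (nhdsWithin x (Set.Ioi x)) (nhds fpx))
    (hfmx : Filter.Tendsto f (nhdsWithin x (Set.Iio x)) (nhds fmx))
    (hfpa : Filter.Tendsto f (nhdsWithin a (Set.Ioi a)) (nhds fpa))
    (hfmb : Filter.Tendsto f (nhdsWithin b (Set.Iio b)) (nhds fmb)) :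
    (1 / 2) * ((b - x) ^ 2 * fpx - (x - a) ^ 2 * fmx) + x ≤
        (∫ t in a..b, t * f t) ∧
      (∫ t in a..b, t * f t) ≤
        (1 / 2) * ((b - x) ^ 2 * fmb - (x - a) ^ 2 * fpa) + x := by
  obtain ⟨hax, hxb⟩ := hx
  -- pointwise bounds from the one-sided limits and monotonicity
  have hle_fmx : ∀ t ∈ Icc a b, t < x → f t ≤ fmx := by
    intro t ht htx
    refine ge_of_tendsto hfmx ?_
    filter_upwards [Ioo_mem_nhdsLT_of_mem (show x ∈ Ioc t x from ⟨htx, le_rfl⟩)]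
      with s hs
    exact hmono ht ⟨ht.1.trans hs.1.le, hs.2.le.trans hxb.le⟩ hs.1.le
  have hge_fpx : ∀ t ∈ Icc a b, x < t → fpx ≤ f t := by
    intro t ht hxt
    refine le_of_tendsto hfpx ?_
    filter_upwards [Ioo_mem_nhdsGT_of_mem (show x ∈ Ico x t from ⟨le_rfl, hxt⟩)]
      with s hs
    exact hmono ⟨hax.le.trans hs.1.le, hs.2.le.trans ht.2⟩ ht hs.2.le
  have hge_fpa : ∀ t ∈ Icc a b, a < t → fpa ≤ f t := by
    intro t ht hat
    refine le_of_tendsto hfpa ?_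
    filter_upwards [Ioo_mem_nhdsGT_of_mem (show a ∈ Ico a t from ⟨le_rfl, hat⟩)]
      with s hs
    exact hmono ⟨hs.1.le, hs.2.le.trans ht.2⟩ ht hs.2.le
  have hle_fmb : ∀ t ∈ Icc a b, t < b → f t ≤ fmb := by
    intro t ht htb
    refine ge_of_tendsto hfmb ?_
    filter_upwards [Ioo_mem_nhdsLT_of_mem (show b ∈ Ioc t b from ⟨htb, le_rfl⟩)]
      with s hs
    exact hmono ht ⟨ht.1.trans hs.1.le, hs.2.le⟩ hs.1.le
  -- integrability
  have hf_int : IntervalIntegrable f volume a b := by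
    apply MonotoneOn.intervalIntegrable
    rwa [uIcc_of_le hab.le]
  have hg_int : IntervalIntegrable (fun t => (t - x) * f t) volume a b :=
    hf_int.continuousOn_mul (by fun_prop)
  have hg_int1 : IntervalIntegrable (fun t => (t - x) * f t) volume a x :=
    hg_int.mono_set (by
      rw [uIcc_of_le hax.le, uIcc_of_le hab.le]
      exact Icc_subset_Icc le_rfl hxb.le)
  have hg_int2 : IntervalIntegrable (fun t => (t - x) * f t) volume x b :=
    hg_int.mono_set (by
      rw [uIcc_of_le hxb.le, uIcc_of_le hab.le]
      exact Icc_subset_Icc hax.le le_rfl)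
  have htf_int : IntervalIntegrable (fun t => t * f t) volume a b :=
    hf_int.continuousOn_mul (by fun_prop)
  -- E(X) - x = ∫ (t - x) f t
  have hE : (∫ t in a..b, t * f t) =
      (∫ t in a..x, (t - x) * f t) + (∫ t in x..b, (t - x) * f t) + x := by
    rw [integral_add_adjacent_intervals hg_int1 hg_int2]
    have : (∫ t in a..b, (t - x) * f t) =
        (∫ t in a..b, t * f t) - x * (∫ t in a..b, f t) := by
      rw [← intervalIntegral.integral_const_mul, ← intervalIntegral.integral_sub htf_int
        (hf_int.const_mul x)]
      congr 1; ext t; ring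
    rw [this, hpdf]; ring
  constructor
  · -- lower bound
    have h1 : (∫ t in a..x, (fun t => (t - x) * fmx) t) ≤ ∫ t in a..x, (t - x) * f t := by
      refine integral_mono_on hax.le (Continuous.intervalIntegrable (by fun_prop) _ _) hg_int1 ?_
      intro t ht
      rcases eq_or_lt_of_le ht.2 with h | h
      · simp [h]
      · exact mul_le_mul_of_nonpos_left (hle_fmx t ⟨ht.1, ht.2.trans hxb.le⟩ h)
          (by linarith)
    have h2 : (∫ t in x..b, (fun t => (t - x) * fpx) t) ≤ ∫ t in x..b, (t - x) * f t := by
      refine integral_mono_on hxb.le (Continuous.intervalIntegrable (by fun_prop) _ _) hg_int2 ?_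
      intro t ht
      rcases eq_or_lt_of_le ht.1 with h | h
      · simp [← h]
      · exact mul_le_mul_of_nonneg_left (hge_fpx t ⟨hax.le.trans ht.1, ht.2⟩ h)
          (by linarith)
    have e1 : (∫ t in a..x, (t - x) * fmx) = -((x - a) ^ 2) / 2 * fmx := by
      rw [intervalIntegral.integral_mul_const, integral_sub_const]; ring_nf
    have e2 : (∫ t in x..b, (t - x) * fpx) = (b - x) ^ 2 / 2 * fpx := by
      rw [intervalIntegral.integral_mul_const, integral_sub_const]; ring_nf
    rw [hE]
    simp only [e1, e2] at h1 h2
    nlinarith [h1, h2]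
  · -- upper bound
    have hne_a : ∀ᵐ t ∂(volume.restrict (Icc a x)), t ≠ a := by
      refine ae_restrict_of_ae ?_
      have : {t : ℝ | ¬ t ≠ a} = {a} := by ext t; simp
      rw [Filter.Eventually, mem_ae_iff]
      simp [this]
    have hne_b : ∀ᵐ t ∂(volume.restrict (Icc x b)), t ≠ b := by
      refine ae_restrict_of_ae ?_
      have : {t : ℝ | ¬ t ≠ b} = {b} := by ext t; simp
      rw [Filter.Eventually, mem_ae_iff]
      simp [this]
    have h1 : (∫ t in a..x, (t - x) * f t) ≤ ∫ t in a..x, (fun t => (t - x) * fpa) t := by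
      refine integral_mono_ae_restrict hax.le hg_int1 (Continuous.intervalIntegrable (by fun_prop) _ _) ?_
      filter_upwards [hne_a, ae_restrict_mem measurableSet_Icc] with t hta ht
      rcases eq_or_lt_of_le ht.2 with h | h
      · simp [h]
      · exact mul_le_mul_of_nonpos_left (hge_fpa t ⟨ht.1, ht.2.trans hxb.le⟩
          (lt_of_le_of_ne ht.1 (Ne.symm hta))) (by linarith)
    have h2 : (∫ t in x..b, (t - x) * f t) ≤ ∫ t in x..b, (fun t => (t - x) * fmb) t := by
      refine integral_mono_ae_restrict hxb.le hg_int2 (Continuous.intervalIntegrable (by fun_prop) _ _) ?_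
      filter_upwards [hne_b, ae_restrict_mem measurableSet_Icc] with t htb ht
      rcases eq_or_lt_of_le ht.1 with h | h
      · simp [← h]
      · exact mul_le_mul_of_nonneg_left (hle_fmb t ⟨hax.le.trans ht.1, ht.2⟩
          (lt_of_le_of_ne ht.2 htb)) (by linarith)
    have e1 : (∫ t in a..x, (t - x) * fpa) = -((x - a) ^ 2) / 2 * fpa := by
      rw [intervalIntegral.integral_mul_const, integral_sub_const]; ring_nf
    have e2 : (∫ t in x..b, (t - x) * fmb) = (b - x) ^ 2 / 2 * fmb := by
      rw [intervalIntegral.integral_mul_const, integral_sub_const]; ring_nf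
    rw [hE]
    simp only [e1, e2] at h1 h2
    nlinarith [h1, h2]
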